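/- arXiv:1601.04930 — 6 statements merged into one kernel-verified Lean document; each statement's English description precedes it below -/
import Mathlib

section
/- The curve γ_r is periodic if and only if r² is rational; moreover, if r is a positive integer then γ_r is periodic with period 2πr. -/
noncomputable def gammaCurve (r : ℝ) : ℝ → Fin 4 → ℝ :=
  fun u => (1 / Real.sqrt (1 + r^2)) •
    ![r * Real.cos (u / r), r * Real.sin (u / r), Real.cos (r * u), Real.sin (r * u)]

lemma gamma_periodic_of (r T : ℝ) (hr : r ≠ 0) (m k : ℤ)
    (h1 : T / r = m * (2 * Real.pi)) (h2 : r * T = k * (2 * Real.pi)) :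
    ∀ u : ℝ, gammaCurve r (u + T) = gammaCurve r u := by
  intro u
  unfold gammaCurve
  have e1 : (u + T) / r = u / r + m * (2 * Real.pi) := by
    rw [← h1]; field_simp
  have e2 : r * (u + T) = r * u + k * (2 * Real.pi) := by
    rw [← h2]; ring
  rw [e1, e2, Real.cos_add_int_mul_two_pi, Real.sin_add_int_mul_two_pi,
      Real.cos_add_int_mul_two_pi, Real.sin_add_int_mul_two_pi]

theorem stmt2 (r : ℝ) (hr : 1 < r) :
    ((∃ T : ℝ, 0 < T ∧ ∀ u : ℝ, gammaCurve r (u + T) = gammaCurve r u) ↔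
      ∃ q : ℚ, (r^2 : ℝ) = q) ∧
    (∀ n : ℕ, 0 < n → r = n →
      ∀ u : ℝ, gammaCurve r (u + 2 * Real.pi * r) = gammaCurve r u) := by
  have hr0 : (0 : ℝ) < r := lt_trans one_pos hr
  have hrne : r ≠ 0 := ne_of_gt hr0
  have hc : (0 : ℝ) < Real.sqrt (1 + r^2) := Real.sqrt_pos.mpr (by positivity)
  constructor
  · constructor
    · rintro ⟨T, hT, hper⟩
      have h0 := congrFun (hper 0) 0
      have h2 := congrFun (hper 0) 2
      simp [gammaCurve] at h0 h2
      have hcos1 : Real.cos (T / r) = 1 := by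
        rcases h0 with h0 | h0
        · exact mul_left_cancel₀ hrne (by rw [h0, mul_one])
        · exact absurd h0 (ne_of_gt hc)
      have hcos2 : Real.cos (r * T) = 1 :=
        mul_left_cancel₀ (inv_ne_zero (ne_of_gt hc)) (by rw [h2, mul_one])
      obtain ⟨m, hm⟩ := (Real.cos_eq_one_iff _).mp hcos1
      obtain ⟨k, hk⟩ := (Real.cos_eq_one_iff _).mp hcos2
      have hmpos : (0 : ℝ) < m := by
        by_contra h
        push_neg at h
        have h1 : (m : ℝ) * (2 * Real.pi) ≤ 0 :=
          mul_nonpos_of_nonpos_of_nonneg h (by positivity)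
        have h2' : T / r ≤ 0 := hm ▸ h1
        exact absurd (div_pos hT hr0) (not_lt.mpr h2')
      have hmne : (m : ℝ) ≠ 0 := ne_of_gt hmpos
      refine ⟨(k : ℚ) / (m : ℚ), ?_⟩
      push_cast
      rw [eq_div_iff hmne]
      have key : r ^ 2 * ((m : ℝ) * (2 * Real.pi)) = (k : ℝ) * (2 * Real.pi) := by
        rw [hm, hk]; field_simp
      have hpi : (2 * Real.pi) ≠ 0 := by positivity
      exact mul_right_cancel₀ hpi (by rw [mul_assoc]; exact key)
    · rintro ⟨q, hq⟩
      have hq0 : (0 : ℝ) < q := by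
        rw [← hq]; positivity
      have hqQ : (0 : ℚ) < q := by exact_mod_cast hq0
      have hden : ((q.den : ℚ)) ≠ 0 := Nat.cast_ne_zero.mpr q.den_nz
      have hnumQ : q * (q.den : ℚ) = q.num := (eq_div_iff hden).mp (Rat.num_div_den q).symm
      have hnum : ((q.num : ℝ)) = (q : ℝ) * q.den := by exact_mod_cast hnumQ.symm
      refine ⟨2 * Real.pi * r * q.den, by positivity, ?_⟩
      apply gamma_periodic_of r _ hrne q.den q.num
      · rw [div_eq_iff hrne]; push_cast; ring
      · rw [hnum, ← hq]; ring
  · intro n hn hrn u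
    apply gamma_periodic_of r _ hrne 1 (n^2)
    · field_simp; norm_num
    · push_cast [hrn]; ring
end

section
/- The curves c_a(u) = (1/√(1+a²))·(a,0,−1,0)·γ_a(u) and c_b(v) = (1/√(1+b²))·T(γ_b(v))·(b,0,0,−1) (quaternion products, with T swapping the last two coordinates) satisfy c_a(0) = c_b(0) = (1,0,0,0) and c_a'(0), c_b'(0) are linearly independent. -/
noncomputable def gammaQ (r : ℝ) : ℝ → Quaternion ℝ :=
  fun u => (1 / Real.sqrt (1 + r^2)) •
    (⟨r * Real.cos (u / r), r * Real.sin (u / r), Real.cos (r * u), Real.sin (r * u)⟩ :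
      Quaternion ℝ)

/-- `T` swaps the last two coordinates of a quaternion. -/
def swapJK (q : Quaternion ℝ) : Quaternion ℝ := ⟨q.re, q.imI, q.imK, q.imJ⟩

noncomputable def gA (a : ℝ) : Quaternion ℝ :=
  (1 / Real.sqrt (1 + a^2)) • (⟨a, 0, -1, 0⟩ : Quaternion ℝ)

noncomputable def gB (b : ℝ) : Quaternion ℝ :=
  (1 / Real.sqrt (1 + b^2)) • (⟨b, 0, 0, -1⟩ : Quaternion ℝ)

noncomputable def cA (a : ℝ) : ℝ → Quaternion ℝ := fun u => gA a * gammaQ a u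

noncomputable def cB (b : ℝ) : ℝ → Quaternion ℝ := fun v => swapJK (gammaQ b v) * gB b

noncomputable def e1 : Quaternion ℝ := ⟨1,0,0,0⟩
noncomputable def ei : Quaternion ℝ := ⟨0,1,0,0⟩
noncomputable def ej : Quaternion ℝ := ⟨0,0,1,0⟩
noncomputable def ek : Quaternion ℝ := ⟨0,0,0,1⟩

lemma hd1 (r : ℝ) : HasDerivAt (fun u : ℝ => r * Real.cos (u / r)) 0 0 := by
  have := (((hasDerivAt_id (0:ℝ)).div_const r).cos).const_mul r
  simpa using this

lemma hd2 (r : ℝ) (hr : r ≠ 0) : HasDerivAt (fun u : ℝ => r * Real.sin (u / r)) 1 0 := by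
  have := (((hasDerivAt_id (0:ℝ)).div_const r).sin).const_mul r
  simpa [mul_inv_cancel₀ hr] using this

lemma hd3 (r : ℝ) : HasDerivAt (fun u : ℝ => Real.cos (r * u)) 0 0 := by
  have := ((hasDerivAt_id (0:ℝ)).const_mul r).cos
  simpa using this

lemma hd4 (r : ℝ) : HasDerivAt (fun u : ℝ => Real.sin (r * u)) r 0 := by
  have := ((hasDerivAt_id (0:ℝ)).const_mul r).sin
  simpa using this

lemma hasDerivAt_gamma (r : ℝ) (hr : r ≠ 0) :
    HasDerivAt (gammaQ r) ((1 / Real.sqrt (1 + r^2)) • (ei + r • ek)) 0 := by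
  have H := (((((hd1 r).smul_const e1).add ((hd2 r hr).smul_const ei)).add
    ((hd3 r).smul_const ej)).add ((hd4 r).smul_const ek)).const_smul
    (1 / Real.sqrt (1 + r^2))
  refine (H.congr_deriv ?_).congr_of_eventuallyEq (Filter.Eventually.of_forall fun u => ?_)
  · ext <;> simp [Quaternion.re_smul, Quaternion.imI_smul, Quaternion.imJ_smul, Quaternion.imK_smul] <;> simp [e1, ei, ej, ek]
  · ext <;> simp [Quaternion.re_smul, Quaternion.imI_smul, Quaternion.imJ_smul, Quaternion.imK_smul] <;> simp [gammaQ, e1, ei, ej, ek]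

lemma hasDerivAt_sgamma (r : ℝ) (hr : r ≠ 0) :
    HasDerivAt (fun v => swapJK (gammaQ r v))
      ((1 / Real.sqrt (1 + r^2)) • (ei + r • ej)) 0 := by
  have H := (((((hd1 r).smul_const e1).add ((hd2 r hr).smul_const ei)).add
    ((hd4 r).smul_const ej)).add ((hd3 r).smul_const ek)).const_smul
    (1 / Real.sqrt (1 + r^2))
  refine (H.congr_deriv ?_).congr_of_eventuallyEq (Filter.Eventually.of_forall fun u => ?_)
  · ext <;> simp [Quaternion.re_smul, Quaternion.imI_smul, Quaternion.imJ_smul, Quaternion.imK_smul] <;> simp [e1, ei, ej, ek]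
  · ext <;> simp [Quaternion.re_smul, Quaternion.imI_smul, Quaternion.imJ_smul, Quaternion.imK_smul] <;> simp [gammaQ, swapJK, e1, ei, ej, ek]

theorem stmt10 (a b : ℝ) (ha : 1 < a) (hb : 1 < b) :
    cA a 0 = 1 ∧ cB b 0 = 1 ∧
    LinearIndependent ℝ ![deriv (cA a) 0, deriv (cB b) 0] := by
  have ha0 : a ≠ 0 := by linarith
  have hb0 : b ≠ 0 := by linarith
  have hsa : Real.sqrt (1 + a^2) * Real.sqrt (1 + a^2) = 1 + a^2 :=
    Real.mul_self_sqrt (by positivity)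
  have hsb : Real.sqrt (1 + b^2) * Real.sqrt (1 + b^2) = 1 + b^2 :=
    Real.mul_self_sqrt (by positivity)
  have hsa0 : Real.sqrt (1 + a^2) ≠ 0 := by positivity
  have hsb0 : Real.sqrt (1 + b^2) ≠ 0 := by positivity
  have hA : HasDerivAt (cA a) ek 0 := by
    have H := (hasDerivAt_gamma a ha0).const_mul (gA a)
    refine H.congr_deriv ?_
    ext <;>
      simp [Quaternion.re_mul, Quaternion.imI_mul, Quaternion.imJ_mul, Quaternion.imK_mul,
        Quaternion.re_smul, Quaternion.re_one, Quaternion.imI_one, Quaternion.imJ_one, Quaternion.imK_one] <;>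
      simp [gA, ek, ei] <;>
      field_simp <;> nlinarith [hsa]
  have hB : HasDerivAt (cB b) ej 0 := by
    have H := (hasDerivAt_sgamma b hb0).mul_const (gB b)
    refine H.congr_deriv ?_
    ext <;>
      simp [Quaternion.re_mul, Quaternion.imI_mul, Quaternion.imJ_mul, Quaternion.imK_mul,
        Quaternion.re_smul, Quaternion.re_one, Quaternion.imI_one, Quaternion.imJ_one, Quaternion.imK_one] <;>
      simp [gB, ej, ei] <;>
      field_simp <;> nlinarith [hsb]
  refine ⟨?_, ?_, ?_⟩
  · ext <;>
      simp [cA, Quaternion.re_mul, Quaternion.imI_mul, Quaternion.imJ_mul, Quaternion.imK_mul,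
        Quaternion.re_smul, Quaternion.re_one, Quaternion.imI_one, Quaternion.imJ_one, Quaternion.imK_one] <;>
      simp [gA, gammaQ] <;>
      field_simp <;> nlinarith [hsa]
  · ext <;>
      simp [cB, Quaternion.re_mul, Quaternion.imI_mul, Quaternion.imJ_mul, Quaternion.imK_mul,
        Quaternion.re_smul, Quaternion.re_one, Quaternion.imI_one, Quaternion.imJ_one, Quaternion.imK_one] <;>
      simp [gB, gammaQ, swapJK] <;>
      field_simp <;> nlinarith [hsb]
  · rw [hA.deriv, hB.deriv, LinearIndependent.pair_iff]
    intro s t h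
    have h1 := congrArg QuaternionAlgebra.imK h
    have h2 := congrArg QuaternionAlgebra.imJ h
    simp [Quaternion.imJ_smul, Quaternion.imK_smul] at h1 h2
    simp [ek, ej] at h1 h2
    exact ⟨h1, h2⟩
end

section
/- Define Y(u,v) = γ_a(u)·T(γ_b(v)) (quaternion product). Then Y(u,v) = (1/√((1+a²)(1+b²)))·(y₁, y₂, y₃, y₄), where y₁ = ab cos(u/a + v/b) − sin(au + bv), y₂ = ab sin(u/a + v/b) + cos(au + bv), y₃ = b cos(au − v/b) − a sin(u/a − bv), y₄ = b sin(au − v/b) + a cos(u/a − bv). -/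
theorem stmt11 (a b : ℝ) (ha : 1 < a) (hb : 1 < b) (u v : ℝ) :
    gammaQ a u * swapJK (gammaQ b v) =
      (1 / Real.sqrt ((1 + a^2) * (1 + b^2))) •
        (⟨a * b * Real.cos (u/a + v/b) - Real.sin (a*u + b*v),
          a * b * Real.sin (u/a + v/b) + Real.cos (a*u + b*v),
          b * Real.cos (a*u - v/b) - a * Real.sin (u/a - b*v),
          b * Real.sin (a*u - v/b) + a * Real.cos (u/a - b*v)⟩ : Quaternion ℝ) := by
  have h1 : (0:ℝ) ≤ 1 + a^2 := by positivity
  have hs : Real.sqrt ((1 + a^2) * (1 + b^2)) =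
      Real.sqrt (1 + a^2) * Real.sqrt (1 + b^2) := Real.sqrt_mul h1 _
  rw [hs]
  ext <;>
    simp only [Quaternion.re_mul, Quaternion.imI_mul, Quaternion.imJ_mul, Quaternion.imK_mul] <;>
    simp [gammaQ, swapJK, Quaternion.re_mul, Quaternion.imI_mul, Quaternion.imJ_mul, Quaternion.imK_mul,
      Real.cos_add, Real.sin_add, Real.cos_sub, Real.sin_sub,
      mul_one_div, div_mul_eq_div_div] <;>
    ring
end

section
/- Let a, b > 1 with a²b² ≠ 1, and let Y(u,v) = (1/√((1+a²)(1+b²)))·(y₁,y₂,y₃,y₄) with y₁ = ab cos(u/a+v/b) − sin(au+bv), y₂ = ab sin(u/a+v/b) + cos(au+bv), y₃ = b cos(au−v/b) − a sin(u/a−bv), y₄ = b sin(au−v/b) + a cos(u/a−bv). Then for every t ∈ ℝ, φ_{α,β}(t)·Y(u,v) = Y(u + z(t), v + w(t)), where β is arbitrary, α = β(b²−a²)/(a²b²−1), z(t) = a(b²−1)βt/(a²b²−1), and w(t) = b(1−a²)βt/(a²b²−1). In particular Y is invariant under the helicoidal one-parameter group φ_{α,β}. -/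
noncomputable def helMotion (α β t : ℝ) : Matrix (Fin 4) (Fin 4) ℝ :=
  !![Real.cos (α*t), -Real.sin (α*t), 0, 0;
     Real.sin (α*t),  Real.cos (α*t), 0, 0;
     0, 0, Real.cos (β*t), -Real.sin (β*t);
     0, 0, Real.sin (β*t),  Real.cos (β*t)]

noncomputable def Yvec (a b : ℝ) (u v : ℝ) : Fin 4 → ℝ :=
  (1 / Real.sqrt ((1 + a^2) * (1 + b^2))) •
    ![a * b * Real.cos (u/a + v/b) - Real.sin (a*u + b*v),
      a * b * Real.sin (u/a + v/b) + Real.cos (a*u + b*v),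
      b * Real.cos (a*u - v/b) - a * Real.sin (u/a - b*v),
      b * Real.sin (a*u - v/b) + a * Real.cos (u/a - b*v)]


private lemma fin4_mk_two (h : 2 < 4) : (⟨2, h⟩ : Fin 4) = 2 := rfl
private lemma fin4_mk_three (h : 3 < 4) : (⟨3, h⟩ : Fin 4) = 3 := rfl

theorem stmt12 (a b β : ℝ) (ha : 1 < a) (hb : 1 < b) (hab : a^2 * b^2 ≠ 1) :
    ∀ t u v : ℝ,
      (helMotion (β * (b^2 - a^2) / (a^2 * b^2 - 1)) β t).mulVec (Yvec a b u v) =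
        Yvec a b (u + a * (b^2 - 1) * β * t / (a^2 * b^2 - 1))
                 (v + b * (1 - a^2) * β * t / (a^2 * b^2 - 1)) := by
  intro t u v
  have hD : a^2 * b^2 - 1 ≠ 0 := sub_ne_zero.mpr hab
  have ha0 : a ≠ 0 := by nlinarith
  have hb0 : b ≠ 0 := by nlinarith
  set z := a * (b^2 - 1) * β * t / (a^2 * b^2 - 1) with hz
  set w := b * (1 - a^2) * β * t / (a^2 * b^2 - 1) with hw
  set A := β * (b^2 - a^2) / (a^2 * b^2 - 1) * t with hA
  have h1 : (u + z)/a + (v + w)/b = (u/a + v/b) + A := by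
    rw [hz, hw, hA]; field_simp; ring
  have h2 : a*(u + z) + b*(v + w) = (a*u + b*v) + A := by
    rw [hz, hw, hA]; field_simp; ring
  have h3 : a*(u + z) - (v + w)/b = (a*u - v/b) + β*t := by
    rw [hz, hw]; field_simp; ring
  have h4 : (u + z)/a - b*(v + w) = (u/a - b*v) + β*t := by
    rw [hz, hw]; field_simp; ring
  funext i
  fin_cases i <;>
  · simp only [helMotion, Yvec, Matrix.mulVec, dotProduct, Fin.sum_univ_four,
      Fin.mk_zero, Fin.mk_one, fin4_mk_two, fin4_mk_three, Fin.isValue, Matrix.cons_val', Matrix.cons_val_zero,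
      Matrix.cons_val_one, Matrix.head_cons, Matrix.empty_val', Matrix.cons_val_fin_one,
      Matrix.cons_val_two, Matrix.cons_val_three, Matrix.tail_cons, Matrix.of_apply, Matrix.vecHead,
      Pi.smul_apply, smul_eq_mul]
    simp only [h1, h2, h3, h4]
    simp only [Real.cos_add, Real.sin_add]
    ring
end

section
/- For the helicoidal surface X(t,s) = φ_{α,β}(t)·γ(s) with γ(s) = (cos φ cos θ, cos φ sin θ, sin φ, 0) parametrized by arc length, the cosine of the angle ν between the unit normal N and the Hopf vector field E₁(x) = (−x₂, x₁, −x₄, x₃) depends only on s and equals cos ν(s) = (β − α)·φ' sin φ cos φ / √(β² sin² φ + α² (φ')² cos² φ). -/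
noncomputable def norm4 (x : Fin 4 → ℝ) : ℝ := Real.sqrt (∑ i, (x i)^2)

noncomputable def inner4 (x y : Fin 4 → ℝ) : ℝ := ∑ i, x i * y i

noncomputable def profileCurve (φ θ : ℝ → ℝ) : ℝ → Fin 4 → ℝ :=
  fun s => ![Real.cos (φ s) * Real.cos (θ s), Real.cos (φ s) * Real.sin (θ s),
             Real.sin (φ s), 0]

noncomputable def helSurface (α β : ℝ) (φ θ : ℝ → ℝ) (t s : ℝ) : Fin 4 → ℝ :=
  (helMotion α β t).mulVec (profileCurve φ θ s)

/-- Components of the profile curve. -/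
noncomputable def px1 (φ θ : ℝ → ℝ) : ℝ → ℝ := fun s => Real.cos (φ s) * Real.cos (θ s)
noncomputable def px2 (φ θ : ℝ → ℝ) : ℝ → ℝ := fun s => Real.cos (φ s) * Real.sin (θ s)
noncomputable def px3 (φ : ℝ → ℝ) : ℝ → ℝ := fun s => Real.sin (φ s)

/-- The (non-normalized) normal field along the helicoidal parametrization. -/
noncomputable def Ntilde (α β : ℝ) (φ θ : ℝ → ℝ) (t s : ℝ) : Fin 4 → ℝ :=
  (helMotion α β t).mulVec
    ![β * px3 φ s * (deriv (px2 φ θ) s * px3 φ s - px2 φ θ s * deriv (px3 φ) s),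
      β * px3 φ s * (px1 φ θ s * deriv (px3 φ) s - deriv (px1 φ θ) s * px3 φ s),
      β * px3 φ s * (deriv (px1 φ θ) s * px2 φ θ s - px1 φ θ s * deriv (px2 φ θ) s),
      -α * deriv (px3 φ) s]

/-- The Hopf vector field `E₁(x) = (−x₂, x₁, −x₄, x₃)`. -/
def hopfE1 (x : Fin 4 → ℝ) : Fin 4 → ℝ := ![-x 1, x 0, -x 3, x 2]

theorem stmt14 (α β : ℝ) (φ θ : ℝ → ℝ)
    (hφ : ContDiff ℝ (⊤ : ℕ∞) φ) (hθ : ContDiff ℝ (⊤ : ℕ∞) θ)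
    (harc : ∀ s, (deriv φ s)^2 + (deriv θ s)^2 * Real.cos (φ s)^2 = 1)
    (hpos : ∀ s, 0 < β^2 * Real.sin (φ s)^2 + α^2 * (deriv φ s)^2 * Real.cos (φ s)^2) :
    ∀ t s : ℝ,
      inner4 (Ntilde α β φ θ t s) (hopfE1 (helSurface α β φ θ t s)) /
          norm4 (Ntilde α β φ θ t s)
        = (β - α) * deriv φ s * Real.sin (φ s) * Real.cos (φ s) /
            Real.sqrt (β^2 * Real.sin (φ s)^2 + α^2 * (deriv φ s)^2 * Real.cos (φ s)^2) := by
  intro t s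
  have hφd : HasDerivAt φ (deriv φ s) s := (hφ.differentiable (by simp) s).hasDerivAt
  have hθd : HasDerivAt θ (deriv θ s) s := (hθ.differentiable (by simp) s).hasDerivAt
  have hd1 : deriv (px1 φ θ) s = -Real.sin (φ s) * deriv φ s * Real.cos (θ s)
      + Real.cos (φ s) * (-Real.sin (θ s) * deriv θ s) :=
    (((Real.hasDerivAt_cos (φ s)).comp s hφd).mul
      ((Real.hasDerivAt_cos (θ s)).comp s hθd)).deriv
  have hd2 : deriv (px2 φ θ) s = -Real.sin (φ s) * deriv φ s * Real.sin (θ s)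
      + Real.cos (φ s) * (Real.cos (θ s) * deriv θ s) :=
    (((Real.hasDerivAt_cos (φ s)).comp s hφd).mul
      ((Real.hasDerivAt_sin (θ s)).comp s hθd)).deriv
  have hd3 : deriv (px3 φ) s = Real.cos (φ s) * deriv φ s :=
    ((Real.hasDerivAt_sin (φ s)).comp s hφd).deriv
  have h1 := Real.sin_sq_add_cos_sq (α*t)
  have h2 := Real.sin_sq_add_cos_sq (β*t)
  have h3 := Real.sin_sq_add_cos_sq (θ s)
  have h4 := Real.sin_sq_add_cos_sq (φ s)
  have h5 := harc s
  have key1 : inner4 (Ntilde α β φ θ t s) (hopfE1 (helSurface α β φ θ t s))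
      = (β - α) * deriv φ s * Real.sin (φ s) * Real.cos (φ s) := by
    simp only [inner4, Ntilde, helSurface, helMotion, profileCurve, hopfE1,
      Matrix.mulVec, dotProduct, Fin.sum_univ_four,
      Matrix.cons_val', Matrix.cons_val_zero, Matrix.cons_val_one, Matrix.head_cons,
      Matrix.empty_val', Matrix.cons_val_fin_one, Matrix.head_fin_const, Matrix.of_apply,
      Matrix.cons_val_two, Matrix.cons_val_three, Matrix.tail_cons,
      Matrix.vecHead, Matrix.vecTail, Function.comp_apply, Matrix.cons_val_succ, hd1, hd2, hd3]
    simp only [px1, px2, px3]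
    linear_combination (Real.cos (φ s)*Real.sin (φ s)^3*Real.sin (θ s)^2*deriv φ s*β + Real.cos (φ s)*Real.sin (φ s)^3*Real.cos (θ s)^2*deriv φ s*β + Real.cos (φ s)^3*Real.sin (φ s)*Real.sin (θ s)^2*deriv φ s*β + Real.cos (φ s)^3*Real.sin (φ s)*Real.cos (θ s)^2*deriv φ s*β) * h1 + ((-1)*Real.cos (φ s)*Real.sin (φ s)*deriv φ s*α) * h2 + (Real.cos (φ s)*Real.sin (φ s)^3*deriv φ s*β + Real.cos (φ s)^3*Real.sin (φ s)*deriv φ s*β) * h3 + (Real.cos (φ s)*Real.sin (φ s)*deriv φ s*β) * h4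
  have key2 : (∑ i, (Ntilde α β φ θ t s i)^2)
      = β^2 * Real.sin (φ s)^2 + α^2 * (deriv φ s)^2 * Real.cos (φ s)^2 := by
    simp only [Ntilde, helMotion,
      Matrix.mulVec, dotProduct, Fin.sum_univ_four,
      Matrix.cons_val', Matrix.cons_val_zero, Matrix.cons_val_one, Matrix.head_cons,
      Matrix.empty_val', Matrix.cons_val_fin_one, Matrix.head_fin_const, Matrix.of_apply,
      Matrix.cons_val_two, Matrix.cons_val_three, Matrix.tail_cons,
      Matrix.vecHead, Matrix.vecTail, Function.comp_apply, Matrix.cons_val_succ, hd1, hd2, hd3]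
    simp only [px1, px2, px3]
    linear_combination (Real.sin (φ s)^6*Real.sin (θ s)^2*deriv φ s^2*β^2 + Real.sin (φ s)^6*Real.cos (θ s)^2*deriv φ s^2*β^2 + Real.cos (φ s)^2*Real.sin (φ s)^4*Real.sin (θ s)^2*deriv θ s^2*β^2 + 2*Real.cos (φ s)^2*Real.sin (φ s)^4*Real.sin (θ s)^2*deriv φ s^2*β^2 + Real.cos (φ s)^2*Real.sin (φ s)^4*Real.cos (θ s)^2*deriv θ s^2*β^2 + 2*Real.cos (φ s)^2*Real.sin (φ s)^4*Real.cos (θ s)^2*deriv φ s^2*β^2 + Real.cos (φ s)^4*Real.sin (φ s)^2*Real.sin (θ s)^2*deriv φ s^2*β^2 + Real.cos (φ s)^4*Real.sin (φ s)^2*Real.cos (θ s)^2*deriv φ s^2*β^2) * h1 + (Real.cos (φ s)^2*deriv φ s^2*α^2 + Real.cos (φ s)^4*Real.sin (φ s)^2*Real.sin (θ s)^4*deriv θ s^2*β^2 + 2*Real.cos (φ s)^4*Real.sin (φ s)^2*Real.cos (θ s)^2*Real.sin (θ s)^2*deriv θ s^2*β^2 + Real.cos (φ s)^4*Real.sin (φ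 s)^2*Real.cos (θ s)^4*deriv θ s^2*β^2) * h2 + (Real.sin (φ s)^6*deriv φ s^2*β^2 + Real.cos (φ s)^2*Real.sin (φ s)^4*deriv θ s^2*β^2 + 2*Real.cos (φ s)^2*Real.sin (φ s)^4*deriv φ s^2*β^2 + Real.cos (φ s)^4*Real.sin (φ s)^2*deriv θ s^2*β^2 + Real.cos (φ s)^4*Real.sin (φ s)^2*deriv φ s^2*β^2 + Real.cos (φ s)^4*Real.sin (φ s)^2*Real.sin (θ s)^2*deriv θ s^2*β^2 + Real.cos (φ s)^4*Real.sin (φ s)^2*Real.cos (θ s)^2*deriv θ s^2*β^2) * h3 + ((-1)*β^2 + deriv φ s^2*β^2 + Real.sin (φ s)^2*deriv φ s^2*β^2 + Real.sin (φ s)^4*deriv φ s^2*β^2 + Real.cos (φ s)^2*deriv θ s^2*β^2 + Real.cos (φ s)^2*Real.sin (φ s)^2*deriv θ s^2*β^2 + Real.cos (φ s)^2*Real.sin (φ s)^2*deriv φ s^2*β^2) * h4 + (β^2 + (-1)*Real.cos (φ s)^2*β^2) * h5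
  rw [key1]
  simp only [norm4, key2]
end

section
/- Let l₁ = λ₂ cos(b ξ + ξ₀), l₂ = λ₂, l₃ = λ₂ sin(b ξ + ξ₀) with ξ = α₁x₁ + α₃x₃ and α₁² ≠ α₃². Then (l₁, l₂, l₃) solves the Lamé system: for all distinct i, j, k, l_{i,x_jx_k} − (l_{i,x_j} l_{j,x_k})/l_j − (l_{i,x_k} l_{k,x_j})/l_k = 0 and (l_{i,x_j}/l_j)_{x_j} + (l_{j,x_i}/l_i)_{x_i} + (l_{i,x_k} l_{j,x_k})/l_k² = 0, at all points where l₁, l₂, l₃ are nonzero, provided b² = (α₁² + α₃²)·c for an appropriate normalization (in particular it holds when b = 1 and α₁² + α₃² = 1). -/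
/-- Partial derivative of `f : ℝ³ → ℝ` in the `i`-th coordinate direction. -/
noncomputable def pd (i : Fin 3) (f : (Fin 3 → ℝ) → ℝ) : (Fin 3 → ℝ) → ℝ :=
  fun x => deriv (fun t => f (Function.update x i t)) (x i)

lemma pd0_eq (f : ℝ → ℝ → ℝ) (x : Fin 3 → ℝ) :
    pd 0 (fun y => f (y 0) (y 2)) x = deriv (fun t => f t (x 2)) (x 0) := by
  simp [pd, Function.update]

lemma pd2_eq (f : ℝ → ℝ → ℝ) (x : Fin 3 → ℝ) :
    pd 2 (fun y => f (y 0) (y 2)) x = deriv (fun t => f (x 0) t) (x 2) := by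
  simp [pd, Function.update]

lemma pd1_eq (f : ℝ → ℝ → ℝ) :
    pd 1 (fun y => f (y 0) (y 2)) = fun _ => 0 := by
  funext x
  simp [pd, Function.update]

lemma hd_cos (A m q t : ℝ) :
    HasDerivAt (fun s => A * Real.cos (m*s+q)) (-(A*m*Real.sin (m*t+q))) t := by
  have h1 : HasDerivAt (fun s : ℝ => m*s+q) m t := by
    simpa using ((hasDerivAt_id t).const_mul m).add_const q
  have := ((Real.hasDerivAt_cos (m*t+q)).comp t h1).const_mul A
  exact this.congr_deriv (by ring)

lemma hd_sin (A m q t : ℝ) :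
    HasDerivAt (fun s => A * Real.sin (m*s+q)) (A*m*Real.cos (m*t+q)) t := by
  have h1 : HasDerivAt (fun s : ℝ => m*s+q) m t := by
    simpa using ((hasDerivAt_id t).const_mul m).add_const q
  have := ((Real.hasDerivAt_sin (m*t+q)).comp t h1).const_mul A
  exact this.congr_deriv (by ring)

lemma deriv_ev_const {g : ℝ → ℝ} {t c : ℝ} (h : ∀ᶠ s in nhds t, g s = c) : deriv g t = 0 := by
  have : deriv g t = deriv (fun _ => c) t := Filter.EventuallyEq.deriv_eq h
  simp [this]

lemma pd0_cos (A b a1 a3 c : ℝ) :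
    pd 0 (fun y => A * Real.cos (b*(a1*y 0+a3*y 2)+c))
      = fun x => -(A*(b*a1)*Real.sin (b*(a1*x 0+a3*x 2)+c)) := by
  funext x
  rw [pd0_eq (fun u v => A * Real.cos (b*(a1*u+a3*v)+c)) x]
  have he : (fun t => A * Real.cos (b*(a1*t+a3*x 2)+c))
      = fun t => A * Real.cos ((b*a1)*t+(b*(a3*x 2)+c)) := by
    funext t; ring_nf
  rw [he, (hd_cos A (b*a1) (b*(a3*x 2)+c) (x 0)).deriv]
  ring_nf

lemma pd2_cos (A b a1 a3 c : ℝ) :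
    pd 2 (fun y => A * Real.cos (b*(a1*y 0+a3*y 2)+c))
      = fun x => -(A*(b*a3)*Real.sin (b*(a1*x 0+a3*x 2)+c)) := by
  funext x
  rw [pd2_eq (fun u v => A * Real.cos (b*(a1*u+a3*v)+c)) x]
  have he : (fun t => A * Real.cos (b*(a1*x 0+a3*t)+c))
      = fun t => A * Real.cos ((b*a3)*t+(b*(a1*x 0)+c)) := by
    funext t; ring_nf
  rw [he, (hd_cos A (b*a3) (b*(a1*x 0)+c) (x 2)).deriv]
  ring_nf

lemma pd0_sin (A b a1 a3 c : ℝ) :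
    pd 0 (fun y => A * Real.sin (b*(a1*y 0+a3*y 2)+c))
      = fun x => A*(b*a1)*Real.cos (b*(a1*x 0+a3*x 2)+c) := by
  funext x
  rw [pd0_eq (fun u v => A * Real.sin (b*(a1*u+a3*v)+c)) x]
  have he : (fun t => A * Real.sin (b*(a1*t+a3*x 2)+c))
      = fun t => A * Real.sin ((b*a1)*t+(b*(a3*x 2)+c)) := by
    funext t; ring_nf
  rw [he, (hd_sin A (b*a1) (b*(a3*x 2)+c) (x 0)).deriv]
  ring_nf

lemma pd2_sin (A b a1 a3 c : ℝ) :
    pd 2 (fun y => A * Real.sin (b*(a1*y 0+a3*y 2)+c))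
      = fun x => A*(b*a3)*Real.cos (b*(a1*x 0+a3*x 2)+c) := by
  funext x
  rw [pd2_eq (fun u v => A * Real.sin (b*(a1*u+a3*v)+c)) x]
  have he : (fun t => A * Real.sin (b*(a1*x 0+a3*t)+c))
      = fun t => A * Real.sin ((b*a3)*t+(b*(a1*x 0)+c)) := by
    funext t; ring_nf
  rw [he, (hd_sin A (b*a3) (b*(a1*x 0)+c) (x 2)).deriv]
  ring_nf

lemma pd_const (i : Fin 3) (c : ℝ) : pd i (fun _ => c) = fun _ => 0 := by
  funext x; simp [pd]

lemma pd_ratio_zero (a : Fin 3) (g h : (Fin 3 → ℝ) → ℝ) (hg : g = fun _ => 0) :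
    pd a (fun y => g y / h y) = fun _ => 0 := by
  subst hg
  have : (fun y => (fun _ => (0:ℝ)) y / h y) = fun _ => (0:ℝ) := by funext y; simp
  rw [this]; exact pd_const a 0

theorem stmt19 (lam₂ b ξ₀ α₁ α₃ : ℝ) (hlam : lam₂ ≠ 0) (hne : α₁^2 ≠ α₃^2)
    (hb : b = 1) (hnorm : α₁^2 + α₃^2 = 1)
    (l : Fin 3 → (Fin 3 → ℝ) → ℝ)
    (hl1 : l 0 = fun x => lam₂ * Real.cos (b * (α₁ * x 0 + α₃ * x 2) + ξ₀))
    (hl2 : l 1 = fun _ => lam₂)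
    (hl3 : l 2 = fun x => lam₂ * Real.sin (b * (α₁ * x 0 + α₃ * x 2) + ξ₀)) :
    ∀ i j k : Fin 3, i ≠ j → j ≠ k → i ≠ k →
      ∀ x : Fin 3 → ℝ, (∀ m : Fin 3, l m x ≠ 0) →
        (pd j (pd k (l i)) x
            - pd j (l i) x * pd k (l j) x / l j x
            - pd k (l i) x * pd j (l k) x / l k x = 0) ∧
        (pd j (fun y => pd j (l i) y / l j y) x
            + pd i (fun y => pd i (l j) y / l i y) x
            + pd k (l i) x * pd k (l j) x / (l k x)^2 = 0) := by
  -- first derivatives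
  have h00 : pd 0 (l 0) = fun x => -(lam₂*(b*α₁)*Real.sin (b*(α₁*x 0+α₃*x 2)+ξ₀)) := by
    rw [hl1]; exact pd0_cos lam₂ b α₁ α₃ ξ₀
  have h20 : pd 2 (l 0) = fun x => -(lam₂*(b*α₃)*Real.sin (b*(α₁*x 0+α₃*x 2)+ξ₀)) := by
    rw [hl1]; exact pd2_cos lam₂ b α₁ α₃ ξ₀
  have h10 : pd 1 (l 0) = fun _ => 0 := by
    rw [hl1]; exact pd1_eq (fun u v => lam₂ * Real.cos (b*(α₁*u+α₃*v)+ξ₀))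
  have h02 : pd 0 (l 2) = fun x => lam₂*(b*α₁)*Real.cos (b*(α₁*x 0+α₃*x 2)+ξ₀) := by
    rw [hl3]; exact pd0_sin lam₂ b α₁ α₃ ξ₀
  have h22 : pd 2 (l 2) = fun x => lam₂*(b*α₃)*Real.cos (b*(α₁*x 0+α₃*x 2)+ξ₀) := by
    rw [hl3]; exact pd2_sin lam₂ b α₁ α₃ ξ₀
  have h12 : pd 1 (l 2) = fun _ => 0 := by
    rw [hl3]; exact pd1_eq (fun u v => lam₂ * Real.sin (b*(α₁*u+α₃*v)+ξ₀))
  have hL1 : ∀ a : Fin 3, pd a (l 1) = fun _ => 0 := by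
    intro a; rw [hl2]; exact pd_const a lam₂
  -- second derivatives needed (all zero)
  have q012 : pd 1 (pd 2 (l 0)) = fun _ => 0 := by
    rw [h20]
    exact pd1_eq (fun u v => -(lam₂*(b*α₃)*Real.sin (b*(α₁*u+α₃*v)+ξ₀)))
  have q021 : pd 2 (pd 1 (l 0)) = fun _ => 0 := by rw [h10]; exact pd_const 2 0
  have q102 : pd 0 (pd 2 (l 1)) = fun _ => 0 := by rw [hL1 2]; exact pd_const 0 0
  have q120 : pd 2 (pd 0 (l 1)) = fun _ => 0 := by rw [hL1 0]; exact pd_const 2 0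
  have q201 : pd 0 (pd 1 (l 2)) = fun _ => 0 := by rw [h12]; exact pd_const 0 0
  have q210 : pd 1 (pd 0 (l 2)) = fun _ => 0 := by
    rw [h02]
    exact pd1_eq (fun u v => lam₂*(b*α₁)*Real.cos (b*(α₁*u+α₃*v)+ξ₀))
  intro i j k hij hjk hik x hx
  -- nonvanishing of sin and cos at x
  have hC : Real.cos (b*(α₁*x 0+α₃*x 2)+ξ₀) ≠ 0 := by
    have := hx 0; rw [hl1] at this
    simpa [hlam, mul_ne_zero_iff] using this
  have hS : Real.sin (b*(α₁*x 0+α₃*x 2)+ξ₀) ≠ 0 := by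
    have := hx 2; rw [hl3] at this
    simpa [hlam, mul_ne_zero_iff] using this
  -- the six ratio terms
  have R10 : pd 1 (fun y => pd 1 (l 0) y / l 1 y) = fun _ => 0 :=
    pd_ratio_zero 1 _ _ h10
  have R12 : pd 1 (fun y => pd 1 (l 2) y / l 1 y) = fun _ => 0 :=
    pd_ratio_zero 1 _ _ h12
  have R01 : pd 0 (fun y => pd 0 (l 1) y / l 0 y) = fun _ => 0 :=
    pd_ratio_zero 0 _ _ (hL1 0)
  have R21 : pd 2 (fun y => pd 2 (l 1) y / l 2 y) = fun _ => 0 :=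
    pd_ratio_zero 2 _ _ (hL1 2)
  have R20 : pd 2 (fun y => pd 2 (l 0) y / l 2 y) x = 0 := by
    have hf : (fun y => pd 2 (l 0) y / l 2 y)
        = fun y => -(lam₂*(b*α₃)*Real.sin (b*(α₁*y 0+α₃*y 2)+ξ₀))
            / (lam₂ * Real.sin (b*(α₁*y 0+α₃*y 2)+ξ₀)) := by
      funext y; rw [h20, hl3]
    rw [hf, pd2_eq (fun u v => -(lam₂*(b*α₃)*Real.sin (b*(α₁*u+α₃*v)+ξ₀))
            / (lam₂ * Real.sin (b*(α₁*u+α₃*v)+ξ₀))) x]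
    refine deriv_ev_const (c := -(b*α₃)) ?_
    have hcont : ContinuousAt (fun t : ℝ => Real.sin (b*(α₁*x 0+α₃*t)+ξ₀)) (x 2) := by
      fun_prop
    filter_upwards [hcont.eventually_ne hS] with t ht
    field_simp
  have R02 : pd 0 (fun y => pd 0 (l 2) y / l 0 y) x = 0 := by
    have hf : (fun y => pd 0 (l 2) y / l 0 y)
        = fun y => lam₂*(b*α₁)*Real.cos (b*(α₁*y 0+α₃*y 2)+ξ₀)
            / (lam₂ * Real.cos (b*(α₁*y 0+α₃*y 2)+ξ₀)) := by
      funext y; rw [h02, hl1]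
    rw [hf, pd0_eq (fun u v => lam₂*(b*α₁)*Real.cos (b*(α₁*u+α₃*v)+ξ₀)
            / (lam₂ * Real.cos (b*(α₁*u+α₃*v)+ξ₀))) x]
    refine deriv_ev_const (c := b*α₁) ?_
    have hcont : ContinuousAt (fun t : ℝ => Real.cos (b*(α₁*t+α₃*x 2)+ξ₀)) (x 0) := by
      fun_prop
    filter_upwards [hcont.eventually_ne hC] with t ht
    field_simp
  have hcase := (by decide :
      ∀ i j k : Fin 3, i ≠ j → j ≠ k → i ≠ k →
        (i = 0 ∧ j = 1 ∧ k = 2) ∨ (i = 0 ∧ j = 2 ∧ k = 1) ∨ (i = 1 ∧ j = 0 ∧ k = 2) ∨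
        (i = 1 ∧ j = 2 ∧ k = 0) ∨ (i = 2 ∧ j = 0 ∧ k = 1) ∨ (i = 2 ∧ j = 1 ∧ k = 0))
    i j k hij hjk hik
  rcases hcase with ⟨rfl,rfl,rfl⟩|⟨rfl,rfl,rfl⟩|⟨rfl,rfl,rfl⟩|⟨rfl,rfl,rfl⟩|⟨rfl,rfl,rfl⟩|⟨rfl,rfl,rfl⟩ <;>
    refine ⟨?_, ?_⟩
  · simp [q012, pd_const, h10, h12, hL1]
  · simp [R10, R01, hL1, pd_const]
  · simp [q021, pd_const, h10, h12, hL1]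
  · rw [R20, R02]; simp [h10, h12]
  · simp [q102, pd_const, hL1]
  · simp [R01, R10, hL1, pd_const]
  · simp [q120, pd_const, hL1]
  · simp [R21, R12, hL1, pd_const]
  · simp [q201, pd_const, h10, h12, hL1]
  · rw [R02, R20]; simp [h10, h12]
  · simp [q210, pd_const, h10, h12, hL1]
  · simp [R12, R21, hL1, pd_const]
end
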